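/- Let A, B, C be abstract state spaces. There is a canonical positive linear embedding A ⊗_min (B ⊗_max C) → (A ⊗_min B) ⊗_max C: every trilinear form in the cone generated by products α ⊗ ω with α ∈ A₊ and ω in the maximal tensor cone of B and C, is nonnegative when evaluated against pairs (h, c) where h is an effect in (A ⊗_min B)* (positive on all product states of A and B) and c ∈ C*₊. -/

import Mathlib

/-- Evaluation of functionals at a fixed vector, as an element of the double dual. -/
def evalAt {B : Type*} [AddCommGroup B] [Module ℝ B] (β : B) :
    (B →ₗ[ℝ] ℝ) →ₗ[ℝ] ℝ where
  toFun b := b β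
  map_add' _ _ := rfl
  map_smul' _ _ := rfl

/-- The product bilinear form `α ⊗ φ` on `A* × B*`, for `α ∈ A` and `φ ∈ B**`. -/
noncomputable def prodF {A B : Type*} [AddCommGroup A] [Module ℝ A] [AddCommGroup B] [Module ℝ B]
    (α : A) (φ : (B →ₗ[ℝ] ℝ) →ₗ[ℝ] ℝ) :
    (A →ₗ[ℝ] ℝ) →ₗ[ℝ] (B →ₗ[ℝ] ℝ) →ₗ[ℝ] ℝ :=
  (evalAt α).smulRight φ

/-! Since `B` is finite-dimensional, each functional `ωᵢ(·, c)` on `B*` is evaluation at some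
`y ∈ B`. It is nonnegative on the dual cone of `B₊` because `c ∈ C*₊`, so `y ∈ B₊` by the bipolar
theorem for the closed cone `B₊` (Hahn–Banach). Each summand is then `tᵢ · h(αᵢ ⊗ y) ≥ 0`. -/

lemma evalAt_surjective {B : Type*} [AddCommGroup B] [Module ℝ B] [FiniteDimensional ℝ B] :
    Function.Surjective (evalAt : B → (B →ₗ[ℝ] ℝ) →ₗ[ℝ] ℝ) := fun φ ↦
  ⟨(Module.evalEquiv ℝ B).symm φ, LinearMap.ext fun f ↦
    LinearMap.congr_fun ((Module.evalEquiv ℝ B).apply_symm_apply φ) f⟩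

lemma mem_of_forall_dual_nonneg {E : Type*} [TopologicalSpace E] [AddCommGroup E]
    [IsTopologicalAddGroup E] [Module ℝ E] [ContinuousSMul ℝ E] [LocallyConvexSpace ℝ E]
    {s : Set E} (hzero : (0 : E) ∈ s) (hsmul : ∀ y ∈ s, ∀ t : ℝ, 0 ≤ t → t • y ∈ s)
    (hadd : ∀ y ∈ s, ∀ y' ∈ s, y + y' ∈ s) (hclosed : IsClosed s) {x : E}
    (hx : ∀ f : E →ₗ[ℝ] ℝ, (∀ y ∈ s, 0 ≤ f y) → 0 ≤ f x) : x ∈ s := by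
  let K : ProperCone ℝ E :=
    { carrier := s
      add_mem' := fun hy hy' ↦ hadd _ hy _ hy'
      zero_mem' := hzero
      smul_mem' := fun t _ hy ↦ hsmul _ hy t t.2
      isClosed' := hclosed }
  by_contra hxs
  obtain ⟨f, hfK, hfx⟩ := K.hyperplane_separation_point (x₀ := x) hxs
  exact hfx.not_ge (hx f hfK)

lemma exists_mem_evalAt_eq_of_dual_nonneg {B : Type*} [NormedAddCommGroup B] [NormedSpace ℝ B]
    [FiniteDimensional ℝ B] {s : Set B} (hzero : (0 : B) ∈ s)
    (hsmul : ∀ y ∈ s, ∀ t : ℝ, 0 ≤ t → t • y ∈ s) (hadd : ∀ y ∈ s, ∀ y' ∈ s, y + y' ∈ s)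
    (hclosed : IsClosed s) {φ : (B →ₗ[ℝ] ℝ) →ₗ[ℝ] ℝ}
    (hφ : ∀ f : B →ₗ[ℝ] ℝ, (∀ y ∈ s, 0 ≤ f y) → 0 ≤ φ f) : ∃ y ∈ s, evalAt y = φ := by
  obtain ⟨y, rfl⟩ := evalAt_surjective φ
  exact ⟨y, mem_of_forall_dual_nonneg hzero hsmul hadd hclosed hφ, rfl⟩

/-- canonical positive embedding `A ⊗_min (B ⊗_max C) → (A ⊗_min B) ⊗_max C`:
every element `∑ tᵢ (αᵢ ⊗ ωᵢ)` of the cone generated by products of `αᵢ ∈ A₊` with states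
`ωᵢ` of the maximal tensor product of `B` and `C` pairs nonnegatively with every pair
`(h, c)`, where `h` is positive on all product states of `A` and `B` (an effect of
`(A ⊗_min B)*`) and `c ∈ C*₊`. -/
theorem min_max_linear_distributivity
    {A B C : Type*} [AddCommGroup A] [Module ℝ A]
    [NormedAddCommGroup B] [NormedSpace ℝ B] [FiniteDimensional ℝ B]
    [AddCommGroup C] [Module ℝ C]
    (posA : Set A) (posB : Set B) (posC : Set C)
    (hBzero : (0 : B) ∈ posB)
    (hBsmul : ∀ y ∈ posB, ∀ t : ℝ, 0 ≤ t → t • y ∈ posB)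
    (hBadd : ∀ y ∈ posB, ∀ y' ∈ posB, y + y' ∈ posB)
    (hBclosed : IsClosed posB)
    {n : ℕ} (t : Fin n → ℝ) (ht : ∀ i, 0 ≤ t i)
    (α : Fin n → A) (hα : ∀ i, α i ∈ posA)
    (ω : Fin n → ((B →ₗ[ℝ] ℝ) →ₗ[ℝ] (C →ₗ[ℝ] ℝ) →ₗ[ℝ] ℝ))
    (hω : ∀ i, ∀ (b : B →ₗ[ℝ] ℝ) (c : C →ₗ[ℝ] ℝ),
      (∀ y ∈ posB, 0 ≤ b y) → (∀ z ∈ posC, 0 ≤ c z) → 0 ≤ ω i b c)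
    (h : ((A →ₗ[ℝ] ℝ) →ₗ[ℝ] (B →ₗ[ℝ] ℝ) →ₗ[ℝ] ℝ) →ₗ[ℝ] ℝ)
    (hh : ∀ x ∈ posA, ∀ y ∈ posB, 0 ≤ h (prodF x (evalAt y)))
    (c : C →ₗ[ℝ] ℝ) (hc : ∀ z ∈ posC, 0 ≤ c z) :
    0 ≤ ∑ i, t i * h (prodF (α i) ((ω i).flip c)) := by
  refine Finset.sum_nonneg fun i _ ↦ mul_nonneg (ht i) ?_
  obtain ⟨y, hy, hyφ⟩ := exists_mem_evalAt_eq_of_dual_nonneg hBzero hBsmul hBadd hBclosed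
    (φ := (ω i).flip c) fun b hb ↦ hω i b c hb hc
  rw [← hyφ]
  exact hh (α i) (hα i) y hy
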